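/- Let (Ω,T) be a minimal subshift over a finite alphabet A with associated set of words W, let B be a Banach space, and let f: Ω → B be continuous. For ω ∈ Ω and w ∈ W, let k_ω^w be the minimal nonnegative integer k with ω_k ω_{k+1} ⋯ ω_{k+|w|−1} = w (which exists by minimality), and set F_ω(w) = Σ_{j=0}^{|w|−1} f(T^{k_ω^w + j} ω). Then for every ω ∈ Ω the function F_ω: W → B is additive. -/

import Mathlib

open Filter Topology

namespace SubshiftErgodic

variable {A : Type*}

/-- The shift map `T` on two-sided sequences over `A`: `(T ω) n = ω (n+1)`. -/
def shift (ω : ℤ → A) : ℤ → A := fun n => ω (n + 1)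

/-- The `n`-th power of the shift: `(shiftZ n ω) k = ω (k + n)`. -/
def shiftZ (n : ℤ) (ω : ℤ → A) : ℤ → A := fun k => ω (k + n)

/-- `Ω` is a subshift: a closed, shift-invariant subset of `A^ℤ`. -/
def IsSubshift [TopologicalSpace A] (Ω : Set (ℤ → A)) : Prop :=
  IsClosed Ω ∧ shift '' Ω = Ω

/-- Minimality: every orbit `{T^n ω : n ∈ ℤ}` is dense in `Ω`. -/
def IsMinimal [TopologicalSpace A] (Ω : Set (ℤ → A)) : Prop :=
  ∀ ω ∈ Ω, Ω ⊆ closure {ρ | ∃ n : ℤ, ρ = shiftZ n ω}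

/-- The finite word `w` occurs in the sequence `ω` at position `k`. -/
def OccursAt (w : List A) (ω : ℤ → A) (k : ℤ) : Prop :=
  ∀ i : Fin w.length, ω (k + (i : ℕ)) = w.get i

/-- The set `W = W(Ω)` of finite words occurring as factors of elements of `Ω`. -/
def words (Ω : Set (ℤ → A)) : Set (List A) :=
  {w | ∃ ω ∈ Ω, ∃ k : ℤ, OccursAt w ω k}

/-- `v` occurs as a factor of the finite word `w` at position `i`. -/
def OccursIn (v w : List A) (i : ℕ) : Prop :=
  i + v.length ≤ w.length ∧ v <+: w.drop i

/-- `♯_v(w)`: the number of occurrences of `v` as a factor of `w`. -/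
noncomputable def occ (v w : List A) : ℕ :=
  {i : ℕ | OccursIn v w i}.ncard

/-- `z` is a return word of `u` (relative to the set of words `W`). -/
def IsReturnWord (W : Set (List A)) (z u : List A) : Prop :=
  z ∈ W ∧ z ++ u ∈ W ∧ occ u (z ++ u) = 2 ∧ u <+: z ++ u

/-- The maximal number of pairwise disjoint occurrences of `v` as a factor of `w`. -/
noncomputable def maxDisjoint (v w : List A) : ℕ :=
  sSup {m : ℕ | ∃ s : Fin m → ℕ, (∀ i, OccursIn v w (s i)) ∧
    ∀ i j : Fin m, i < j → s i + v.length ≤ s j}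

/-- The filter expressing `|w| → ∞` along words `w ∈ W`. -/
def wordsFilter (W : Set (List A)) : Filter (List A) :=
  ⨅ L : ℕ, Filter.principal {w | w ∈ W ∧ L ≤ w.length}

/-- `lim_{|w| → ∞} g w = x` over `w ∈ W`: for every `ε > 0` there is `L` with
`‖g w - x‖ ≤ ε` for all `w ∈ W` with `|w| ≥ L`. -/
def TendstoWords {B : Type*} [SeminormedAddCommGroup B] (W : Set (List A))
    (g : List A → B) (x : B) : Prop :=
  ∀ ε : ℝ, 0 < ε → ∃ L : ℕ, ∀ w ∈ W, L ≤ w.length → ‖g w - x‖ ≤ ε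

/-- `liminf_{|w| → ∞} g w` over `w ∈ W`, valued in the extended reals. -/
noncomputable def liminfWords (W : Set (List A)) (g : List A → ℝ) : EReal :=
  Filter.liminf (fun w => (g w : EReal)) (wordsFilter W)

/-- `limsup_{|w| → ∞} g w` over `w ∈ W`, valued in the extended reals. -/
noncomputable def limsupWords (W : Set (List A)) (g : List A → ℝ) : EReal :=
  Filter.limsup (fun w => (g w : EReal)) (wordsFilter W)

/-- `ν(v) = liminf_{|w| → ∞} l_v(w)/|w|`, where
`l_v(w) = (max number of pairwise disjoint copies of v in w) ⬝ |v|`. -/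
noncomputable def nu (W : Set (List A)) (v : List A) : EReal :=
  liminfWords W (fun w => ((maxDisjoint v w * v.length : ℕ) : ℝ) / (w.length : ℝ))

/-- Condition (PQ): uniform positivity of quasiweights. -/
def PQ (W : Set (List A)) : Prop :=
  ∃ C : ℝ, 0 < C ∧ ∀ v ∈ W, v ≠ [] → (C : EReal) ≤ nu W v

/-- Unique ergodicity: all word frequencies `♯_v(w)/|w|` converge as `|w| → ∞`. -/
def UniquelyErgodic (Ω : Set (ℤ → A)) : Prop :=
  ∀ v ∈ words Ω, ∃ x : ℝ,
    TendstoWords (words Ω) (fun w => (occ v w : ℝ) / (w.length : ℝ)) x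

/-- `F : W → ℝ` is subadditive. -/
def IsSubadditive (W : Set (List A)) (F : List A → ℝ) : Prop :=
  ∀ a b : List A, a ∈ W → b ∈ W → a ++ b ∈ W → F (a ++ b) ≤ F a + F b

/-- `F^(n) = max { F v / |v| : v ∈ W, |v| = n }`. -/
noncomputable def wordSup (W : Set (List A)) (F : List A → ℝ) (n : ℕ) : ℝ :=
  sSup ((fun v => F v / (v.length : ℝ)) '' {v | v ∈ W ∧ v.length = n})

/-- Condition (SET): the uniform subadditive ergodic theorem holds, i.e. for every
subadditive `F` the limit `lim_{|w|→∞} F(w)/|w|` exists and equals `inf_{n ≥ 1} F^(n)`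
(in the extended reals). -/
def SET (W : Set (List A)) : Prop :=
  ∀ F : List A → ℝ, IsSubadditive W F →
    Filter.Tendsto (fun w => ((F w / (w.length : ℝ) : ℝ) : EReal)) (wordsFilter W)
      (nhds (⨅ n : {n : ℕ // 1 ≤ n}, ((wordSup W F n.1 : ℝ) : EReal)))

/-- A Banach-space-valued function `F : W → B` is additive. -/
def IsAdditive {B : Type*} [SeminormedAddCommGroup B] (W : Set (List A))
    (F : List A → B) : Prop :=
  ∃ D : ℝ, 0 < D ∧ ∃ c : ℕ → ℝ, Antitone c ∧ (∀ n, 0 ≤ c n) ∧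
    Filter.Tendsto c Filter.atTop (nhds 0) ∧
    (∀ vs : List (List A), (∀ v ∈ vs, v ∈ W) → vs.flatten ∈ W →
      ‖F vs.flatten - (vs.map F).sum‖ ≤ (vs.map fun v => c v.length * (v.length : ℝ)).sum) ∧
    ∀ v ∈ W, ‖F v‖ ≤ D * (v.length : ℝ)

/-- Condition (HP): powers in `W` have uniformly bounded exponent. -/
def HP (W : Set (List A)) : Prop :=
  ∃ N : ℕ, 0 < N ∧ ∀ v : List A, v ≠ [] → ∀ k : ℕ,
    (List.replicate k v).flatten ∈ W → k ≤ N

/-- Condition (PW): uniform positivity of weights. -/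
def PW (W : Set (List A)) : Prop :=
  ∃ E : ℝ, 0 < E ∧ ∀ v ∈ W, v ≠ [] →
    (E : EReal) ≤ liminfWords W (fun w => ((occ v w * v.length : ℕ) : ℝ) / (w.length : ℝ))

/-- Linear repetitivity. -/
def LinearlyRepetitive (W : Set (List A)) : Prop :=
  ∃ D : ℝ, 0 < D ∧ ∀ v ∈ W, v ≠ [] → ∀ w ∈ W, D * (v.length : ℝ) ≤ (w.length : ℝ) →
    v <:+: w

/-- Aperiodicity: no element of `Ω` is periodic. -/
def Aperiodic (Ω : Set (ℤ → A)) : Prop :=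
  ∀ ω ∈ Ω, ∀ p : ℕ, 1 ≤ p → shiftZ (p : ℤ) ω ≠ ω

/-- `m(n)`: the minimal length of a return word of a word of length `n` in `W`. -/
noncomputable def mRet (W : Set (List A)) (n : ℕ) : ℕ :=
  sInf {k : ℕ | ∃ v z : List A, v ∈ W ∧ v.length = n ∧ IsReturnWord W z v ∧ z.length = k}

/-- `k_ω^w`: the minimal nonnegative position at which `w` occurs in `ω`. -/
noncomputable def firstOcc (ω : ℤ → A) (w : List A) : ℕ :=
  sInf {k : ℕ | OccursAt w ω (k : ℤ)}

/-- `F_ω(w) = ∑_{j=0}^{|w|-1} f(T^{k_ω^w + j} ω)`. -/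
noncomputable def birkhoffF {B : Type*} [AddCommMonoid B] (f : (ℤ → A) → B)
    (ω : ℤ → A) (w : List A) : B :=
  ∑ j ∈ Finset.range w.length, f (shiftZ ((firstOcc ω w : ℤ) + (j : ℤ)) ω)

/-!
`F_ω(w)` is the Birkhoff sum of `f` along a stretch of the orbit of `ω` that reads `w`.
Two orbit stretches reading the same word of length `L` agree, at their `j`-th points, on the
window `[-r, r]` with `r = min j (L - 1 - j)`; by uniform continuity of `f` on the compact `Ω`
their Birkhoff sums therefore differ by at most `2 ∑_{j<L} δ j`, where `δ m` is the oscillation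
of `f` between points agreeing on `[-m, m]`. Since `δ → 0`, this error is `o(L)` by Cesàro.
Cutting the Birkhoff sum over the first occurrence of `v₁ ⋯ vₙ` into the pieces read by the
`vᵢ` and comparing each with `F_ω(vᵢ)` gives (A1).
-/

open Set

section Shift

@[simp] lemma shiftZ_zero (ω : ℤ → A) : shiftZ 0 ω = ω := by
  funext k; simp [shiftZ]

lemma shiftZ_shiftZ (m n : ℤ) (ω : ℤ → A) : shiftZ m (shiftZ n ω) = shiftZ (n + m) ω := by
  funext k; simp only [shiftZ, add_assoc, add_comm m]

lemma shift_eq_shiftZ_one : (shift : (ℤ → A) → ℤ → A) = shiftZ 1 := rfl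

lemma iterate_shift (n : ℕ) : (shift : (ℤ → A) → ℤ → A)^[n] = shiftZ n := by
  induction n with
  | zero => funext ω; simp
  | succ n ih =>
    funext ω
    rw [Function.iterate_succ_apply', ih, shift_eq_shiftZ_one, shiftZ_shiftZ]
    push_cast; rfl

lemma IsSubshift.mapsTo_shift [TopologicalSpace A] {Ω : Set (ℤ → A)} (hΩ : IsSubshift Ω) :
    MapsTo shift Ω Ω := fun _ hx => hΩ.2 ▸ mem_image_of_mem shift hx

lemma IsSubshift.isCompact [Finite A] [TopologicalSpace A] [DiscreteTopology A]
    {Ω : Set (ℤ → A)} (hΩ : IsSubshift Ω) : IsCompact Ω :=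
  hΩ.1.isCompact

lemma IsSubshift.shiftZ_mem [TopologicalSpace A] {Ω : Set (ℤ → A)} (hΩ : IsSubshift Ω)
    {ω : ℤ → A} (hω : ω ∈ Ω) (n : ℤ) : shiftZ n ω ∈ Ω := by
  induction n using Int.induction_on with
  | zero => simpa using hω
  | succ i ih =>
    rw [← shiftZ_shiftZ, ← shift_eq_shiftZ_one]
    exact hΩ.mapsTo_shift ih
  | pred i ih =>
    rw [← hΩ.2] at ih
    obtain ⟨ρ, hρ, hρω⟩ := ih
    rwa [sub_eq_add_neg, ← shiftZ_shiftZ, ← hρω, shift_eq_shiftZ_one, shiftZ_shiftZ,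
      add_neg_cancel, shiftZ_zero]

lemma occursAt_shiftZ {w : List A} {ω : ℤ → A} {n k : ℤ} :
    OccursAt w (shiftZ n ω) k ↔ OccursAt w ω (k + n) := by
  simp only [OccursAt, shiftZ, add_right_comm]

lemma OccursAt.append_left {u v : List A} {ω : ℤ → A} {k : ℤ}
    (h : OccursAt (u ++ v) ω k) : OccursAt u ω k := fun i => by
  simpa [List.getElem_append_left i.2] using h ⟨i, by simp; omega⟩

lemma OccursAt.append_right {u v : List A} {ω : ℤ → A} {k : ℤ}
    (h : OccursAt (u ++ v) ω k) : OccursAt v ω (k + u.length) := fun i => by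
  simpa [add_assoc] using h ⟨u.length + i, by simp⟩

lemma OccursAt.eqOn_Ico {v : List A} {x y : ℤ → A} (hx : OccursAt v x 0)
    (hy : OccursAt v y 0) : EqOn x y (Ico 0 v.length) := by
  rintro i ⟨hi0, hiL⟩
  lift i to ℕ using hi0
  have hi : i < v.length := by exact_mod_cast hiL
  simpa using (hx ⟨i, hi⟩).trans (hy ⟨i, hi⟩).symm

lemma continuous_shiftZ [TopologicalSpace A] (n : ℤ) :
    Continuous (shiftZ n : (ℤ → A) → ℤ → A) :=
  continuous_pi fun k => continuous_apply (k + n)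

end Shift

section Cylinder

variable [TopologicalSpace A]

lemma exists_eqOn_Icc_subset {x : ℤ → A} {U : Set (ℤ → A)} (hU : U ∈ 𝓝 x) :
    ∃ m : ℕ, {y | EqOn y x (Icc (-(m : ℤ)) m)} ⊆ U := by
  rw [nhds_pi, Filter.mem_pi] at hU
  obtain ⟨I, hI, t, ht, hIt⟩ := hU
  refine ⟨hI.toFinset.sup Int.natAbs, fun y hy => hIt fun i hi => ?_⟩
  have hle : i.natAbs ≤ hI.toFinset.sup Int.natAbs := Finset.le_sup (hI.mem_toFinset.2 hi)
  rw [hy (abs_le.1 (by rw [Int.abs_eq_natAbs]; exact_mod_cast hle))]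
  exact mem_of_mem_nhds (ht i)

variable [DiscreteTopology A]

lemma isOpen_setOf_occursAt (w : List A) (k : ℤ) : IsOpen {ρ : ℤ → A | OccursAt w ρ k} := by
  simp only [OccursAt, ofPred_forall]
  exact isOpen_iInter_of_finite fun i =>
    (continuous_apply (A := fun _ : ℤ => A) (k + (i : ℕ))).isOpen_preimage {w.get i}
      (isOpen_discrete _)

lemma isOpen_setOf_eqOn_Icc (x : ℤ → A) (m : ℕ) :
    IsOpen {y : ℤ → A | EqOn y x (Icc (-(m : ℤ)) m)} := by
  simp only [EqOn, ofPred_forall]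
  exact (finite_Icc _ _).isOpen_biInter fun i _ =>
    (continuous_apply (A := fun _ : ℤ => A) i).isOpen_preimage {x i} (isOpen_discrete _)

lemma IsCompact.exists_forall_eqOn_Icc_norm_sub_lt {K : Set (ℤ → A)} (hK : IsCompact K)
    {B : Type*} [SeminormedAddCommGroup B] {f : (ℤ → A) → B} (hf : ContinuousOn f K)
    {ε : ℝ} (hε : 0 < ε) :
    ∃ m : ℕ, ∀ x ∈ K, ∀ y ∈ K, EqOn x y (Icc (-(m : ℤ)) m) → ‖f x - f y‖ < ε := by
  have hloc : ∀ x ∈ K, ∃ m : ℕ, ∀ y ∈ K, EqOn y x (Icc (-(m : ℤ)) m) →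
      ‖f y - f x‖ < ε / 2 := by
    intro x hx
    obtain ⟨U, hU, hxU, hUf⟩ :=
      mem_nhdsWithin.1 (hf x hx (Metric.ball_mem_nhds (f x) (half_pos hε)))
    obtain ⟨m, hm⟩ := exists_eqOn_Icc_subset (hU.mem_nhds hxU)
    exact ⟨m, fun y hy hyx => by simpa [dist_eq_norm] using hUf ⟨hm hyx, hy⟩⟩
  choose! r hr using hloc
  obtain ⟨t, htK, ht, hKt⟩ := hK.elim_finite_subcover_image (b := K)
    (c := fun x => {y | EqOn y x (Icc (-(r x : ℤ)) (r x))})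
    (fun x _ => isOpen_setOf_eqOn_Icc x (r x)) (fun x hx => mem_iUnion₂.2 ⟨x, hx, fun _ _ => rfl⟩)
  refine ⟨ht.toFinset.sup r, fun x hx y hy hxy => ?_⟩
  obtain ⟨x₀, hx₀t, hxx₀⟩ := mem_iUnion₂.1 (hKt hx)
  have hsub : Icc (-(r x₀ : ℤ)) (r x₀) ⊆
      Icc (-((ht.toFinset.sup r : ℕ) : ℤ)) (ht.toFinset.sup r : ℕ) := by
    have : r x₀ ≤ ht.toFinset.sup r := Finset.le_sup (ht.mem_toFinset.2 hx₀t)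
    exact Icc_subset_Icc (by omega) (by omega)
  have hyx₀ : EqOn y x₀ (Icc (-(r x₀ : ℤ)) (r x₀)) := (hxy.symm.mono hsub).trans hxx₀
  calc ‖f x - f y‖ ≤ ‖f x - f x₀‖ + ‖f y - f x₀‖ := by
        simpa [norm_sub_rev (f y)] using norm_sub_le_norm_sub_add_norm_sub (f x) (f x₀) (f y)
    _ < ε / 2 + ε / 2 := add_lt_add (hr x₀ (htK hx₀t) x hx hxx₀) (hr x₀ (htK hx₀t) y hy hyx₀)
    _ = ε := add_halves ε

end Cylinder

lemma IsMinimal.exists_nat_occursAt [Finite A] [TopologicalSpace A] [DiscreteTopology A]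
    {Ω : Set (ℤ → A)} (hmin : IsMinimal Ω) (hΩ : IsSubshift Ω) {v : List A}
    (hv : v ∈ words Ω) {ω : ℤ → A} (hω : ω ∈ Ω) : ∃ k : ℕ, OccursAt v ω k := by
  obtain ⟨ω', hω', k₀, hk₀⟩ := hv
  have hU := isOpen_setOf_occursAt v 0
  have hcover : Ω ⊆ ⋃ n : ℤ, shiftZ n ⁻¹' {ρ | OccursAt v ρ 0} := by
    intro ρ hρ
    have hk₀' : shiftZ k₀ ω' ∈ {ρ | OccursAt v ρ 0} := occursAt_shiftZ.2 (by simpa using hk₀)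
    obtain ⟨_, hk₀ρ, n, rfl⟩ :=
      mem_closure_iff.1 (hmin ρ hρ (hΩ.shiftZ_mem hω' k₀)) _ hU hk₀'
    exact mem_iUnion.2 ⟨n, hk₀ρ⟩
  obtain ⟨t, ht⟩ := hΩ.1.isCompact.elim_finite_subcover _
    (fun n => hU.preimage (continuous_shiftZ n)) hcover
  -- Shifting `ω` forward past every `-n` with `n ∈ t` makes the occurrence position nonnegative.
  set m : ℕ := t.sup fun n => (-n).toNat
  obtain ⟨n, hn, hocc⟩ := mem_iUnion₂.1 (ht (hΩ.shiftZ_mem hω m))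
  have hnm : (-n).toNat ≤ m := Finset.le_sup (f := fun n : ℤ => (-n).toNat) hn
  have hocc' : OccursAt v ω (n + m) := by
    simpa [shiftZ_shiftZ, occursAt_shiftZ] using hocc
  exact ⟨(n + m).toNat, by rwa [Int.toNat_of_nonneg (by omega)]⟩

lemma occursAt_shiftZ_firstOcc [Finite A] [TopologicalSpace A] [DiscreteTopology A]
    {Ω : Set (ℤ → A)} (hmin : IsMinimal Ω) (hΩ : IsSubshift Ω) {v : List A}
    (hv : v ∈ words Ω) {ω : ℤ → A} (hω : ω ∈ Ω) : OccursAt v (shiftZ (firstOcc ω v) ω) 0 :=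
  occursAt_shiftZ.2 (by rw [zero_add]; exact Nat.sInf_mem (hmin.exists_nat_occursAt hΩ hv hω))

section Modulus

variable {B : Type*} [SeminormedAddCommGroup B]

noncomputable def cylinderModulus (K : Set (ℤ → A)) (f : (ℤ → A) → B) (m : ℕ) : ℝ :=
  sSup {r | ∃ x ∈ K, ∃ y ∈ K, EqOn x y (Icc (-(m : ℤ)) m) ∧ ‖f x - f y‖ = r}

variable {K : Set (ℤ → A)} {f : (ℤ → A) → B}

lemma cylinderModulus_nonneg (m : ℕ) : 0 ≤ cylinderModulus K f m :=
  Real.sSup_nonneg <| by rintro _ ⟨x, -, y, -, -, rfl⟩; exact norm_nonneg _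

variable [TopologicalSpace A] (hK : IsCompact K) (hf : ContinuousOn f K)
include hK hf

lemma norm_sub_le_cylinderModulus {m : ℕ} {x y : ℤ → A} (hx : x ∈ K) (hy : y ∈ K)
    (hxy : EqOn x y (Icc (-(m : ℤ)) m)) : ‖f x - f y‖ ≤ cylinderModulus K f m := by
  obtain ⟨M, hM⟩ := hK.exists_bound_of_continuousOn hf
  refine le_csSup ⟨M + M, ?_⟩ ⟨x, hx, y, hy, hxy, rfl⟩
  rintro _ ⟨x', hx', y', hy', -, rfl⟩
  exact (norm_sub_le _ _).trans (add_le_add (hM x' hx') (hM y' hy'))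

lemma antitone_cylinderModulus : Antitone (cylinderModulus K f) := fun m n hmn =>
  Real.sSup_le (by
    rintro _ ⟨x, hx, y, hy, hxy, rfl⟩
    exact norm_sub_le_cylinderModulus hK hf hx hy
      (hxy.mono (Icc_subset_Icc (by omega) (by omega))))
    (cylinderModulus_nonneg m)

lemma tendsto_cylinderModulus [DiscreteTopology A] :
    Tendsto (cylinderModulus K f) atTop (𝓝 0) := by
  rw [Metric.tendsto_atTop]
  intro ε hε
  obtain ⟨N, hN⟩ := IsCompact.exists_forall_eqOn_Icc_norm_sub_lt hK hf (half_pos hε)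
  have hNε : cylinderModulus K f N ≤ ε / 2 := Real.sSup_le
    (by rintro _ ⟨x, hx, y, hy, hxy, rfl⟩; exact (hN x hx y hy hxy).le) (half_pos hε).le
  refine ⟨N, fun n hn => ?_⟩
  rw [Real.dist_0_eq_abs, abs_of_nonneg (cylinderModulus_nonneg n)]
  linarith [antitone_cylinderModulus hK hf hn]

end Modulus

lemma exists_antitone_majorant {b : ℕ → ℝ} (hb : Tendsto b atTop (𝓝 0)) :
    ∃ c : ℕ → ℝ, Antitone c ∧ (∀ n, 0 ≤ c n) ∧ Tendsto c atTop (𝓝 0) ∧ b ≤ c := by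
  have hbdd : ∀ n, BddAbove (range fun m => |b (n + m)|) := fun n =>
    hb.abs.bddAbove_range.mono
      (range_subset_iff.2 fun m => mem_range_self (f := fun k => |b k|) (n + m))
  set c : ℕ → ℝ := fun n => ⨆ m, |b (n + m)|
  have hbc : ∀ n m, |b (n + m)| ≤ c n := fun n => le_ciSup (hbdd n)
  have hc0 : ∀ n, 0 ≤ c n := fun n => (abs_nonneg _).trans (hbc n 0)
  refine ⟨c, fun n n' hn => ciSup_le fun m => ?_, hc0, ?_,
    fun n => (le_abs_self _).trans (by simpa using hbc n 0)⟩
  · simpa [show n + (n' - n + m) = n' + m by omega] using hbc n (n' - n + m)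
  · rw [Metric.tendsto_atTop] at hb ⊢
    intro ε hε
    obtain ⟨N, hN⟩ := hb (ε / 2) (half_pos hε)
    refine ⟨N, fun n hn => ?_⟩
    have hcn : c n ≤ ε / 2 := ciSup_le fun m => by
      simpa [Real.dist_0_eq_abs] using (hN (n + m) (by omega)).le
    rw [Real.dist_0_eq_abs, abs_of_nonneg (hc0 n)]
    linarith

lemma birkhoffF_eq_birkhoffSum {B : Type*} [AddCommMonoid B] (f : (ℤ → A) → B)
    (ω : ℤ → A) (w : List A) :
    birkhoffF f ω w = birkhoffSum shift f w.length (shiftZ (firstOcc ω w) ω) := by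
  simp only [birkhoffF, birkhoffSum, iterate_shift, shiftZ_shiftZ]

section BirkhoffSum

variable [TopologicalSpace A] {Ω : Set (ℤ → A)} {B : Type*} [NormedAddCommGroup B]
  {f : (ℤ → A) → B}

lemma norm_birkhoffSum_shift_le (hΩ : IsSubshift Ω) {M : ℝ} (hM : ∀ x ∈ Ω, ‖f x‖ ≤ M)
    {x : ℤ → A} (hx : x ∈ Ω) (n : ℕ) : ‖birkhoffSum shift f n x‖ ≤ n * M :=
  calc ‖birkhoffSum shift f n x‖ ≤ ∑ k ∈ Finset.range n, ‖f (shift^[k] x)‖ := norm_sum_le _ _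
    _ ≤ ∑ _k ∈ Finset.range n, M :=
      Finset.sum_le_sum fun k _ => hM _ (hΩ.mapsTo_shift.iterate k hx)
    _ = n * M := by simp

variable [Finite A] [DiscreteTopology A]

lemma norm_birkhoffSum_shift_sub_le (hΩ : IsSubshift Ω) (hf : ContinuousOn f Ω)
    {x y : ℤ → A} (hx : x ∈ Ω) (hy : y ∈ Ω) {L : ℕ} (hxy : EqOn x y (Ico 0 L)) :
    ‖birkhoffSum shift f L x - birkhoffSum shift f L y‖ ≤
      2 * ∑ j ∈ Finset.range L, cylinderModulus Ω f j := by
  set δ := cylinderModulus Ω f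
  have hterm : ∀ j ∈ Finset.range L,
      dist (f (shift^[j] x)) (f (shift^[j] y)) ≤ δ j + δ (L - 1 - j) := by
    intro j hj
    have hjL := Finset.mem_range.1 hj
    have hwin : EqOn (shift^[j] x) (shift^[j] y)
        (Icc (-((min j (L - 1 - j) : ℕ) : ℤ)) (min j (L - 1 - j) : ℕ)) := by
      intro i hi
      simp only [mem_Icc, Nat.cast_min] at hi
      simp only [iterate_shift, shiftZ]
      exact hxy ⟨by omega, by omega⟩
    rw [dist_eq_norm]
    calc ‖f (shift^[j] x) - f (shift^[j] y)‖ ≤ δ (min j (L - 1 - j)) :=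
          norm_sub_le_cylinderModulus hΩ.isCompact hf (hΩ.mapsTo_shift.iterate j hx)
            (hΩ.mapsTo_shift.iterate j hy) hwin
      _ = max (δ j) (δ (L - 1 - j)) := (antitone_cylinderModulus hΩ.isCompact hf).map_min
      _ ≤ δ j + δ (L - 1 - j) :=
          max_le_add_of_nonneg (cylinderModulus_nonneg _) (cylinderModulus_nonneg _)
  rw [← dist_eq_norm]
  calc dist (birkhoffSum shift f L x) (birkhoffSum shift f L y)
      ≤ ∑ j ∈ Finset.range L, dist (f (shift^[j] x)) (f (shift^[j] y)) :=
        dist_birkhoffSum_birkhoffSum_le _ _ _ _ _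
    _ ≤ ∑ j ∈ Finset.range L, (δ j + δ (L - 1 - j)) := Finset.sum_le_sum hterm
    _ = 2 * ∑ j ∈ Finset.range L, δ j := by
        rw [Finset.sum_add_distrib, Finset.sum_range_reflect δ L, two_mul]

variable (hmin : IsMinimal Ω) (hΩ : IsSubshift Ω) (hf : ContinuousOn f Ω) {ω : ℤ → A}
  (hω : ω ∈ Ω)
include hmin hΩ hf hω

lemma norm_birkhoffSum_shift_sub_birkhoffF_le {v : List A} (hv : v ∈ words Ω) {x : ℤ → A}
    (hx : x ∈ Ω) (hvx : OccursAt v x 0) :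
    ‖birkhoffSum shift f v.length x - birkhoffF f ω v‖ ≤
      2 * ∑ j ∈ Finset.range v.length, cylinderModulus Ω f j := by
  rw [birkhoffF_eq_birkhoffSum]
  exact norm_birkhoffSum_shift_sub_le hΩ hf hx (hΩ.shiftZ_mem hω _)
    (hvx.eqOn_Ico (occursAt_shiftZ_firstOcc hmin hΩ hv hω))

lemma norm_birkhoffSum_shift_flatten_sub_sum_le {vs : List (List A)}
    (hvs : ∀ v ∈ vs, v ∈ words Ω) {x : ℤ → A} (hx : x ∈ Ω) (hocc : OccursAt vs.flatten x 0) :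
    ‖birkhoffSum shift f vs.flatten.length x - (vs.map (birkhoffF f ω)).sum‖ ≤
      (vs.map fun v => 2 * ∑ j ∈ Finset.range v.length, cylinderModulus Ω f j).sum := by
  induction vs generalizing x with
  | nil => simp
  | cons v vs ih =>
    rw [List.flatten_cons] at hocc ⊢
    have hrest : OccursAt vs.flatten (shift^[v.length] x) 0 := by
      rw [iterate_shift, occursAt_shiftZ]
      simpa using hocc.append_right
    rw [List.length_append, birkhoffSum_add, List.map_cons, List.sum_cons, List.map_cons,
      List.sum_cons, add_sub_add_comm]
    exact (norm_add_le _ _).trans (add_le_add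
      (norm_birkhoffSum_shift_sub_birkhoffF_le hmin hΩ hf hω (hvs v (by simp)) hx
        hocc.append_left)
      (ih (fun u hu => hvs u (by simp [hu])) (hΩ.mapsTo_shift.iterate _ hx) hrest))

end BirkhoffSum

theorem birkhoffF_isAdditive_general
    {A : Type*} [Fintype A] [TopologicalSpace A] [DiscreteTopology A]
    (Ω : Set (ℤ → A)) (hΩ : IsSubshift Ω) (hmin : IsMinimal Ω)
    (B : Type*) [NormedAddCommGroup B]
    (f : (ℤ → A) → B) (hf : ContinuousOn f Ω) :
    ∀ ω ∈ Ω, IsAdditive (words Ω) (birkhoffF f ω) := by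
  intro ω hω
  obtain ⟨M, hM⟩ := hΩ.isCompact.exists_bound_of_continuousOn hf
  set δ := cylinderModulus Ω f
  have hcesaro :
      Tendsto (fun n : ℕ => (n : ℝ)⁻¹ * ∑ j ∈ Finset.range n, 2 * δ j) atTop (𝓝 0) := by
    simpa using ((tendsto_cylinderModulus hΩ.isCompact hf).const_mul 2).cesaro
  obtain ⟨c, hc_anti, hc0, hc, hcesaro_le⟩ := exists_antitone_majorant hcesaro
  have herr : ∀ n : ℕ, 2 * ∑ j ∈ Finset.range n, δ j ≤ c n * n := by
    intro n
    rcases Nat.eq_zero_or_pos n with rfl | hn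
    · simp
    · have := hcesaro_le n
      rwa [inv_mul_le_iff₀ (by positivity), ← Finset.mul_sum, mul_comm (n : ℝ)] at this
  refine ⟨max M 1, by positivity, c, hc_anti, hc0, hc, fun vs hvs hflat => ?_, fun v _ => ?_⟩
  · rw [birkhoffF_eq_birkhoffSum]
    exact (norm_birkhoffSum_shift_flatten_sub_sum_le hmin hΩ hf hω hvs (hΩ.shiftZ_mem hω _)
      (occursAt_shiftZ_firstOcc hmin hΩ hflat hω)).trans
      (List.sum_le_sum fun v _ => herr v.length)
  · rw [birkhoffF_eq_birkhoffSum, mul_comm]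
    exact (norm_birkhoffSum_shift_le hΩ hM (hΩ.shiftZ_mem hω _) _).trans
      (by gcongr; exact le_max_left _ _)

/-- on a minimal subshift, for every `ω ∈ Ω` the function
`F_ω(w) = ∑_{j<|w|} f(T^{k_ω^w+j} ω)` built from a continuous `f` is additive. -/
theorem birkhoffF_isAdditive
    {A : Type*} [Fintype A] [Nonempty A] [TopologicalSpace A] [DiscreteTopology A]
    (Ω : Set (ℤ → A)) (hΩ : IsSubshift Ω) (hne : Ω.Nonempty) (hmin : IsMinimal Ω)
    (B : Type*) [NormedAddCommGroup B] [NormedSpace ℝ B] [CompleteSpace B]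
    (f : (ℤ → A) → B) (hf : ContinuousOn f Ω) :
    ∀ ω ∈ Ω, IsAdditive (words Ω) (birkhoffF f ω) :=
  birkhoffF_isAdditive_general Ω hΩ hmin B f hf

end SubshiftErgodic
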